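/- Let R be an integral domain, k ≥ 2, and let P_1, …, P_k be prime ideals of R that are pairwise incomparable (for all i ≠ j, P_i ⊄ P_j and P_j ⊄ P_i). Let D = P_1 ∪ ⋯ ∪ P_k and let n ≥ 1 be an integer. Then: (1) the girth of the subgraph of n-TG(R, D) induced on D is 3 or ∞; (2) if n is odd, then the girth of the subgraph of n-TG(R, D) induced on R \ D is 3, 4, or ∞; (3) if n is even and there exists x ∈ R with x^n = -1, then the girth of the subgraph of n-TG(R, D) induced on R \ D is 3, 4, or ∞. -/

import Mathlib

open SimpleGraph

/-- The `n`-total graph of a commutative ring `R` with respect to a subset `D ⊆ R`: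
two distinct vertices `x, y` are adjacent iff `x ^ n + y ^ n ∈ D`. -/
def nTotalGraph {R : Type*} [CommRing R] (D : Set R) (n : ℕ) : SimpleGraph R where
  Adj x y := x ≠ y ∧ x ^ n + y ^ n ∈ D
  symm := ⟨fun x y ⟨h, hd⟩ => ⟨h.symm, by rwa [add_comm]⟩⟩
  loopless := ⟨fun x ⟨h, _⟩ => h rfl⟩

lemma egirth_le_of_cycle {V : Type*} {G : SimpleGraph V} {a : V} {w : G.Walk a a}
    (hw : w.IsCycle) : G.egirth ≤ w.length := by
  unfold SimpleGraph.egirth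
  exact iInf_le_of_le a <| iInf_le_of_le w <| iInf_le _ hw

lemma egirth_le_three {V : Type*} {G : SimpleGraph V} {a b c : V}
    (hab : G.Adj a b) (hbc : G.Adj b c) (hca : G.Adj c a) : G.egirth ≤ 3 := by
  have hw : (Walk.cons hab (.cons hbc (.cons hca .nil))).IsCycle := by
    rw [Walk.cons_isCycle_iff, Walk.cons_isPath_iff, Walk.cons_isPath_iff]
    simp [hab.ne, hbc.ne, hca.ne, hab.ne', hbc.ne', hca.ne', Sym2.eq_iff]
  simpa using egirth_le_of_cycle hw

lemma egirth_le_four {V : Type*} {G : SimpleGraph V} {a b c d : V}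
    (hab : G.Adj a b) (hbc : G.Adj b c) (hcd : G.Adj c d) (hda : G.Adj d a)
    (hac : a ≠ c) (hbd : b ≠ d) : G.egirth ≤ 4 := by
  have hw : (Walk.cons hab (.cons hbc (.cons hcd (.cons hda .nil)))).IsCycle := by
    rw [Walk.cons_isCycle_iff, Walk.cons_isPath_iff, Walk.cons_isPath_iff,
      Walk.cons_isPath_iff]
    simp [hab.ne, hbc.ne, hcd.ne, hda.ne, hab.ne', hbc.ne', hcd.ne', hda.ne',
      hac, hbd, hac.symm, hbd.symm, Sym2.eq_iff]
  simpa using egirth_le_of_cycle hw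

theorem stmt_19 {R : Type*} [CommRing R] [IsDomain R]
    (k : ℕ) (hk : 2 ≤ k) (P : Fin k → Ideal R) (hprime : ∀ i, (P i).IsPrime)
    (hincomp : ∀ i j, i ≠ j → ¬ P i ≤ P j)
    (D : Set R) (hD : D = ⋃ i, (P i : Set R))
    (n : ℕ) (hn : 1 ≤ n) :
    (((nTotalGraph D n).induce D).egirth = 3 ∨ ((nTotalGraph D n).induce D).egirth = ⊤) ∧
    (Odd n →
      ((nTotalGraph D n).induce Dᶜ).egirth = 3 ∨ ((nTotalGraph D n).induce Dᶜ).egirth = 4 ∨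
        ((nTotalGraph D n).induce Dᶜ).egirth = ⊤) ∧
    (Even n → (∃ x : R, x ^ n = -1) →
      ((nTotalGraph D n).induce Dᶜ).egirth = 3 ∨ ((nTotalGraph D n).induce Dᶜ).egirth = 4 ∨
        ((nTotalGraph D n).induce Dᶜ).egirth = ⊤) := by
  have hn0 : n ≠ 0 := by omega
  obtain ⟨i0, i1, hi01⟩ : ∃ i0 i1 : Fin k, i0 ≠ i1 :=
    ⟨⟨0, by omega⟩, ⟨1, by omega⟩, by intro h; simpa using congrArg Fin.val h⟩
  have hmemD : ∀ {i : Fin k} {x : R}, x ∈ P i → x ∈ D := by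
    intro i x h; rw [hD]; exact Set.mem_iUnion.mpr ⟨i, h⟩
  have hnotP : ∀ {x : R}, x ∈ Dᶜ → ∀ i, x ∉ P i := fun hx i h => hx (hmemD h)
  -- a nonzero element in each prime
  have hex : ∀ i : Fin k, ∃ a : R, a ∈ P i ∧ a ≠ 0 := by
    intro i
    obtain ⟨j, hj⟩ : ∃ j : Fin k, i ≠ j := by
      by_cases h : i = i0
      · exact ⟨i1, h ▸ hi01⟩
      · exact ⟨i0, h⟩
    obtain ⟨a, ha, ha'⟩ := SetLike.not_le_iff_exists.mp (hincomp i j hj)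
    exact ⟨a, ha, fun h => ha' (h ▸ (P j).zero_mem)⟩
  -- Part 1: a triangle inside D
  have part1 : ((nTotalGraph D n).induce D).egirth = 3 := by
    obtain ⟨a, ha, ha0⟩ := hex i0
    have h1top : (1 : R) ∉ P i0 := fun h => (hprime i0).ne_top ((Ideal.eq_top_iff_one _).mpr h)
    obtain ⟨b, hb, hb0, hba⟩ : ∃ b : R, b ∈ P i0 ∧ b ≠ 0 ∧ b ≠ a := by
      by_cases h2 : a + a = 0
      · refine ⟨a * a, Ideal.mul_mem_left _ _ ha, mul_ne_zero ha0 ha0, ?_⟩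
        intro h
        have : a * (a - 1) = 0 := by linear_combination h
        rcases mul_eq_zero.mp this with h' | h'
        · exact ha0 h'
        · exact h1top (by rwa [sub_eq_zero.mp h'] at ha)
      · exact ⟨a + a, Ideal.add_mem _ ha ha, h2, fun h => ha0 (by linear_combination h)⟩
    have hpow : ∀ {x : R}, x ∈ P i0 → x ^ n ∈ P i0 := by
      intro x hx
      have : x ^ n = x ^ (n - 1) * x := by
        conv_lhs => rw [show n = (n-1) + 1 by omega]
        ring
      rw [this]; exact Ideal.mul_mem_left _ _ hx
    refine le_antisymm ?_ SimpleGraph.three_le_egirth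
    refine egirth_le_three (a := ⟨0, hmemD (P i0).zero_mem⟩) (b := ⟨a, hmemD ha⟩)
      (c := ⟨b, hmemD hb⟩) ?_ ?_ ?_
    · refine ⟨by simpa using ha0.symm, hmemD (i := i0) ?_⟩
      show (0:R) ^ n + a ^ n ∈ P i0
      rw [zero_pow hn0, zero_add]; exact hpow ha
    · exact ⟨by simpa using hba.symm,
        hmemD (Ideal.add_mem _ (hpow ha) (hpow hb))⟩
    · refine ⟨by simpa using hb0, hmemD (i := i0) ?_⟩
      show b ^ n + (0:R) ^ n ∈ P i0
      rw [zero_pow hn0, add_zero]; exact hpow hb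
  -- Part 2/3: girth of the complement graph is 3, 4 or ∞.
  have part2 : ((nTotalGraph D n).induce Dᶜ).egirth = 3 ∨
      ((nTotalGraph D n).induce Dᶜ).egirth = 4 ∨
      ((nTotalGraph D n).induce Dᶜ).egirth = ⊤ := by
    by_cases hac : ((nTotalGraph D n).induce Dᶜ).IsAcyclic
    · exact Or.inr (Or.inr (SimpleGraph.egirth_eq_top.mpr hac))
    -- extract an edge
    obtain ⟨a, w, hw, -⟩ := SimpleGraph.exists_egirth_eq_length.mpr hac
    obtain ⟨b, hadj⟩ : ∃ b, ((nTotalGraph D n).induce Dᶜ).Adj a b := by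
      cases w with
      | nil => exact absurd rfl hw.ne_nil
      | cons h w' => exact ⟨_, h⟩
    set x : R := (a : R) with hxdef
    set y : R := (b : R) with hydef
    have hxD : x ∈ Dᶜ := a.2
    have hyD : y ∈ Dᶜ := b.2
    have hadj' : x ≠ y ∧ x ^ n + y ^ n ∈ D := hadj
    obtain ⟨hxy, hsum⟩ := hadj'
    obtain ⟨i2, hS⟩ : ∃ i, x ^ n + y ^ n ∈ P i := by
      rw [hD] at hsum; exact Set.mem_iUnion.mp hsum
    -- R is infinite
    have hRinf : Infinite R := by
      by_contra hfin
      rw [not_infinite_iff_finite] at hfin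
      have hf := Finite.isField_of_domain R
      obtain ⟨c, hc, hc0⟩ := hex i0
      obtain ⟨d, hd⟩ := hf.mul_inv_cancel hc0
      exact (hprime i0).ne_top ((Ideal.eq_top_iff_one _).mpr (hd ▸ Ideal.mul_mem_right _ _ hc))
    -- a nonzero element of the intersection of all primes
    choose c hc hc0 using hex
    set q : R := ∏ i : Fin k, c i with hq
    have hq0 : q ≠ 0 := Finset.prod_ne_zero_iff.mpr fun i _ => hc0 i
    have hqmem : ∀ i, q ∈ P i := by
      intro i
      obtain ⟨t, ht⟩ := Finset.dvd_prod_of_mem c (Finset.mem_univ i)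
      rw [hq, ht]; exact Ideal.mul_mem_right _ _ (hc i)
    have hx0 : x ≠ 0 := fun h => hxD (h ▸ hmemD (P i0).zero_mem)
    have hy0 : y ≠ 0 := fun h => hyD (h ▸ hmemD (P i0).zero_mem)
    -- choose a good multiple p of q
    have hbadfin : (({0} : Set R) ∪ {t : R | y * t = x - y} ∪ {t : R | x * t = y - x}).Finite := by
      refine (Set.Finite.union (Set.Finite.union (by simp) ?_) ?_)
      · exact Set.Subsingleton.finite (fun s hs t ht => mul_left_cancel₀ hy0 (hs.trans ht.symm))
      · exact Set.Subsingleton.finite (fun s hs t ht => mul_left_cancel₀ hx0 (hs.trans ht.symm))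
    have hrange : (Set.range (fun r : R => q * r)).Infinite :=
      Set.infinite_range_of_injective (mul_right_injective₀ hq0)
    obtain ⟨p, hpmem, hpbad⟩ := (hrange.diff hbadfin).nonempty
    obtain ⟨r, hr⟩ := hpmem
    have hpP : ∀ i, p ∈ P i := fun i => hr ▸ Ideal.mul_mem_right _ _ (hqmem i)
    simp only [Set.mem_union, Set.mem_singleton_iff, Set.mem_setOf_eq, not_or] at hpbad
    obtain ⟨⟨hp0, hpy⟩, hpx⟩ := hpbad
    have h1p : ∀ i, (1 : R) + p ∉ P i := by
      intro i h
      have h1 : (1 : R) ∈ P i := by simpa using Ideal.sub_mem _ h (hpP i)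
      exact (hprime i).ne_top ((Ideal.eq_top_iff_one _).mpr h1)
    have h1p0 : (1 : R) + p ≠ 0 := fun h => h1p i0 (h ▸ (P i0).zero_mem)
    set u : R := x * (1 + p) with hu
    set v : R := y * (1 + p) with hv
    have huD : u ∈ Dᶜ := by
      intro h
      rw [hD] at h
      obtain ⟨i, hi⟩ := Set.mem_iUnion.mp h
      rcases (hprime i).mem_or_mem hi with h' | h'
      · exact hnotP hxD i h'
      · exact h1p i h'
    have hvD : v ∈ Dᶜ := by
      intro h
      rw [hD] at h
      obtain ⟨i, hi⟩ := Set.mem_iUnion.mp h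
      rcases (hprime i).mem_or_mem hi with h' | h'
      · exact hnotP hyD i h'
      · exact h1p i h'
    -- the key divisibility: (1+p)^n - 1 ∈ P i for all i
    have hdvd : ∀ i, (1 + p) ^ n - 1 ∈ P i := by
      intro i
      obtain ⟨t, ht⟩ := sub_dvd_pow_sub_pow (1 + p) 1 n
      have h' : (1 + p) ^ n - 1 = p * t := by linear_combination ht
      rw [h']; exact Ideal.mul_mem_right _ _ (hpP i)
    -- adjacency facts
    have hyu : y ^ n + u ^ n ∈ P i2 := by
      have : y ^ n + u ^ n = x ^ n * ((1 + p) ^ n - 1) + (x ^ n + y ^ n) := by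
        rw [hu, mul_pow]; ring
      rw [this]
      exact Ideal.add_mem _ (Ideal.mul_mem_left _ _ (hdvd i2)) hS
    have huv : u ^ n + v ^ n ∈ P i2 := by
      have : u ^ n + v ^ n = (1 + p) ^ n * (x ^ n + y ^ n) := by rw [hu, hv, mul_pow, mul_pow]; ring
      rw [this]; exact Ideal.mul_mem_left _ _ hS
    have hvx : v ^ n + x ^ n ∈ P i2 := by
      have : v ^ n + x ^ n = y ^ n * ((1 + p) ^ n - 1) + (x ^ n + y ^ n) := by
        rw [hv, mul_pow]; ring
      rw [this]
      exact Ideal.add_mem _ (Ideal.mul_mem_left _ _ (hdvd i2)) hS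
    -- distinctness
    have hxu : x ≠ u := fun h => mul_ne_zero hx0 hp0 (by rw [hu] at h; linear_combination -h)
    have hyv : y ≠ v := fun h => mul_ne_zero hy0 hp0 (by rw [hv] at h; linear_combination -h)
    have hyu' : y ≠ u := fun h => hpx (by rw [hu] at h; linear_combination -h)
    have hxv : x ≠ v := fun h => hpy (by rw [hv] at h; linear_combination -h)
    have huv' : u ≠ v := by
      intro h
      rcases mul_eq_zero.mp (show (x - y) * (1 + p) = 0 by rw [hu, hv] at h; linear_combination h) with h' | h'
      · exact hxy (sub_eq_zero.mp h')
      · exact h1p0 h'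
    -- build the 4-cycle a — b — U — V — a
    have h4 : ((nTotalGraph D n).induce Dᶜ).egirth ≤ 4 := by
      refine egirth_le_four (a := a) (b := b) (c := ⟨u, huD⟩) (d := ⟨v, hvD⟩) hadj ?_ ?_ ?_ ?_ ?_
      · exact ⟨hyu', hmemD hyu⟩
      · exact ⟨huv', hmemD huv⟩
      · exact ⟨fun h => hxv h.symm, hmemD hvx⟩
      · exact fun h => hxu (congrArg Subtype.val h)
      · exact fun h => hyv (congrArg Subtype.val h)
    have h3 := SimpleGraph.three_le_egirth (G := (nTotalGraph D n).induce Dᶜ)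
    set e := ((nTotalGraph D n).induce Dᶜ).egirth with he
    have hetop : e ≠ ⊤ := fun h => by rw [h] at h4; exact absurd h4 (by norm_num)
    lift e to ℕ using hetop with m hm
    have h3' : 3 ≤ m := by exact_mod_cast h3
    have h4' : m ≤ 4 := by exact_mod_cast h4
    interval_cases m
    · exact Or.inl (by exact_mod_cast rfl)
    · exact Or.inr (Or.inl (by exact_mod_cast rfl))
  exact ⟨Or.inl part1, fun _ => part2, fun _ _ => part2⟩
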